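/- For r ≥ 1, n ≥ 0 and 0 ≤ k ≤ n: ⟨n,k⟩_(r,1) = A(n+r, k; r)/r!, i.e. r! · ⟨n,k⟩_(r,1) = A(n+r, k; r), where ⟨n,k⟩_(s,t) is defined by ⟨n,k⟩_(s,t) = (k+s)⟨n-1,k⟩_(s,t) + (n-k+t)⟨n-1,k-1⟩_(s,t) + δ_{k0}δ_{n0} (zero for negative indices), and A(m,k;r) counts permutations of S_m with exactly k r-descents. -/

import Mathlib

open Finset

def pval {n : ℕ} (σ : Equiv.Perm (Fin n)) (i : ℕ) : ℕ :=
  if h : i < n then (σ ⟨i, h⟩ : ℕ) else 0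

def desSet {n : ℕ} (σ : Equiv.Perm (Fin n)) : Finset ℕ :=
  (Finset.range (n - 1)).filter (fun i => pval σ (i + 1) < pval σ i)

def des {n : ℕ} (σ : Equiv.Perm (Fin n)) : ℕ := (desSet σ).card

def maj {n : ℕ} (σ : Equiv.Perm (Fin n)) : ℕ := ∑ i ∈ desSet σ, (i + 1)

def lrmin {n : ℕ} (σ : Equiv.Perm (Fin n)) : ℕ :=
  ((Finset.range n).filter (fun i => ∀ j ∈ Finset.range i, pval σ i < pval σ j)).card

def rlmin {n : ℕ} (σ : Equiv.Perm (Fin n)) : ℕ :=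
  ((Finset.range n).filter
    (fun i => ∀ j ∈ Finset.range n, i < j → pval σ i < pval σ j)).card

def stE (s t : ℕ) : ℕ → ℕ → ℕ
  | 0, k => if k = 0 then 1 else 0
  | n + 1, 0 => s * stE s t n 0
  | n + 1, k + 1 => (k + 1 + s) * stE s t n (k + 1) + (n - k + t) * stE s t n k

def rdesSet {m : ℕ} (r : ℕ) (σ : Equiv.Perm (Fin m)) : Finset ℕ :=
  (Finset.range (m - 1)).filter (fun i => pval σ (i + 1) + r ≤ pval σ i)

def rdes {m : ℕ} (r : ℕ) (σ : Equiv.Perm (Fin m)) : ℕ := (rdesSet r σ).card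

def rEulerian (m k r : ℕ) : ℕ :=
  ((Finset.univ : Finset (Equiv.Perm (Fin m))).filter (fun σ => rdes r σ = k)).card

/-!
Every permutation of `Fin (m + 1)` arises exactly once by inserting the largest value `m` into
a permutation `τ` of `Fin m` at a slot `p`. The insertion creates the `r`-descent `(m, τ p)` iff
`τ p + r ≤ m`, and it breaks the `r`-descent of `τ` ending at slot `p`, if there is one; a broken
`r`-descent is always replaced by a created one. With `m = n + r`, `n + 1` slots create an
`r`-descent and `rdes r τ` slots break one, so `n + 1 - rdes r τ` insertions raise the number of
`r`-descents by one and the other `rdes r τ + r` keep it. This is the recursion of `stE r 1`, and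
`A(r, 0; r) = r!` starts it.
-/

/-- Inserts the new largest value `m` into `τ` at position `p`. -/
def insertMax {m : ℕ} (τ : Equiv.Perm (Fin m)) (p : Fin (m + 1)) : Equiv.Perm (Fin (m + 1)) :=
  (finSuccEquiv' p).trans ((Equiv.optionCongr τ).trans (finSuccEquiv' (Fin.last m)).symm)

section insertMax

variable {m : ℕ} (τ : Equiv.Perm (Fin m)) (p : Fin (m + 1))

@[simp]
lemma insertMax_apply_self : insertMax τ p p = Fin.last m := by
  simp [insertMax]

@[simp]
lemma insertMax_apply_succAbove (j : Fin m) :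
    insertMax τ p (p.succAbove j) = (τ j).castSucc := by
  simp [insertMax, finSuccEquiv'_symm_some_below (Fin.castSucc_lt_last _)]

lemma insertMax_apply_eq_last_iff {x : Fin (m + 1)} : insertMax τ p x = Fin.last m ↔ x = p := by
  rw [← insertMax_apply_self τ p, (insertMax τ p).injective.eq_iff]

lemma insertMax_injective :
    Function.Injective fun x : Equiv.Perm (Fin m) × Fin (m + 1) => insertMax x.1 x.2 := by
  rintro ⟨τ, p⟩ ⟨τ', p'⟩ h
  dsimp only at h
  obtain rfl : p = p' := by
    rw [← insertMax_apply_eq_last_iff τ' p', ← h, insertMax_apply_self]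
  have hτ (j : Fin m) : τ j = τ' j :=
    Fin.castSucc_injective _ (by rw [← insertMax_apply_succAbove, h, insertMax_apply_succAbove])
  rw [Equiv.ext hτ]

lemma insertMax_bijective :
    Function.Bijective fun x : Equiv.Perm (Fin m) × Fin (m + 1) => insertMax x.1 x.2 := by
  refine (Fintype.bijective_iff_injective_and_card _).mpr ⟨insertMax_injective, ?_⟩
  simp [Fintype.card_perm, Nat.factorial_succ, mul_comm]

end insertMax

section pval

variable {m : ℕ}

lemma pval_coe (σ : Equiv.Perm (Fin m)) (i : Fin m) : pval σ i = σ i := by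
  simp [pval]

lemma pval_of_le (σ : Equiv.Perm (Fin m)) {i : ℕ} (h : m ≤ i) : pval σ i = 0 := by
  simp [pval, Nat.not_lt.mpr h]

lemma pval_lt (σ : Equiv.Perm (Fin m)) {i : ℕ} (h : i < m) : pval σ i < m := by
  simp [pval, h]

lemma pval_symm_pval (σ : Equiv.Perm (Fin m)) {i : ℕ} (h : i < m) :
    pval σ.symm (pval σ i) = i := by
  simp [pval, h]

lemma card_filter_pval (σ : Equiv.Perm (Fin m)) (P : ℕ → Prop) [DecidablePred P] :
    #{i ∈ range m | P (pval σ i)} = #{v ∈ range m | P v} := by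
  have hσ {v : ℕ} (hv : v < m) : pval σ (pval σ.symm v) = v := by
    simpa using pval_symm_pval σ.symm hv
  refine card_nbij' (pval σ) (pval σ.symm) ?_ ?_ ?_ ?_
  · intro i hi
    simp_all [pval_lt]
  · intro v hv
    simp_all [pval_lt]
  · intro i hi
    simp_all [pval_symm_pval]
  · intro v hv
    simp_all

variable (τ : Equiv.Perm (Fin m)) (p : Fin (m + 1))

lemma pval_insertMax_self : pval (insertMax τ p) p = m := by
  simpa using pval_coe (insertMax τ p) p

lemma pval_insertMax_succAbove (j : Fin m) :
    pval (insertMax τ p) (p.succAbove j) = pval τ j := by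
  simp [pval_coe]

lemma pval_insertMax_of_lt {i : ℕ} (h : i < p) : pval (insertMax τ p) i = pval τ i := by
  have hi : i < m := by omega
  simpa [Fin.succAbove_of_castSucc_lt p ⟨i, hi⟩ h] using pval_insertMax_succAbove τ p ⟨i, hi⟩

lemma pval_insertMax_succ_of_le {i : ℕ} (h : p ≤ i) :
    pval (insertMax τ p) (i + 1) = pval τ i := by
  rcases lt_or_ge i m with hi | hi
  · simpa [Fin.succAbove_of_le_castSucc p ⟨i, hi⟩ h] using pval_insertMax_succAbove τ p ⟨i, hi⟩
  · rw [pval_of_le _ (by omega), pval_of_le _ hi]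

end pval

lemma card_filter_succ_eq (s : Finset ℕ) (a : ℕ) :
    #{i ∈ s | i + 1 = a} = if a ∈ s.map (addRightEmbedding 1) then 1 else 0 := by
  rw [← card_map (addRightEmbedding 1)]
  convert congrArg card (filter_eq' (s.map (addRightEmbedding 1)) a) using 2
  · rw [filter_map]
    rfl
  · split_ifs <;> rfl

section rdes

variable {m : ℕ} (r : ℕ)

/-- Slots `p` at which inserting `m` creates the `r`-descent `(m, τ p)`. -/
def rdesCreatingSlots (τ : Equiv.Perm (Fin m)) : Finset ℕ :=
  {i ∈ range m | pval τ i + r ≤ m}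

/-- Slots `p` at which inserting `m` breaks the `r`-descent of `τ` at `p - 1`. -/
def rdesBreakingSlots (τ : Equiv.Perm (Fin m)) : Finset ℕ :=
  (rdesSet r τ).map (addRightEmbedding 1)

variable {r}

lemma mem_rdesSet {σ : Equiv.Perm (Fin m)} {i : ℕ} :
    i ∈ rdesSet r σ ↔ i + 1 < m ∧ pval σ (i + 1) + r ≤ pval σ i := by
  rw [rdesSet, mem_filter, mem_range]
  omega

lemma rdesBreakingSlots_subset_rdesCreatingSlots (τ : Equiv.Perm (Fin m)) :
    rdesBreakingSlots r τ ⊆ rdesCreatingSlots r τ := by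
  intro i hi
  obtain ⟨j, hj, rfl⟩ := mem_map.mp hi
  have := pval_lt τ (i := j) (by rw [mem_rdesSet] at hj; omega)
  rw [mem_rdesSet] at hj
  rw [rdesCreatingSlots, mem_filter, mem_range]
  exact ⟨hj.1, by simp only [addRightEmbedding_apply]; omega⟩

variable (τ : Equiv.Perm (Fin m)) (p : Fin (m + 1))

lemma mem_rdesSet_insertMax_of_succ_lt {i : ℕ} (h : i + 1 < p) :
    i ∈ rdesSet r (insertMax τ p) ↔ i ∈ rdesSet r τ := by
  rw [mem_rdesSet, mem_rdesSet, pval_insertMax_of_lt τ p h, pval_insertMax_of_lt τ p (by omega)]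
  omega

lemma notMem_rdesSet_insertMax_of_succ_eq {i : ℕ} (h : i + 1 = p) :
    i ∉ rdesSet r (insertMax τ p) := by
  have := pval_lt τ (i := i) (by omega)
  rw [mem_rdesSet, h, pval_insertMax_self, pval_insertMax_of_lt τ p (by omega)]
  omega

lemma mem_rdesSet_insertMax_self :
    ↑p ∈ rdesSet r (insertMax τ p) ↔ ↑p ∈ rdesCreatingSlots r τ := by
  rw [mem_rdesSet, pval_insertMax_self, pval_insertMax_succ_of_le τ p le_rfl, rdesCreatingSlots,
    mem_filter, mem_range]
  omega

lemma succ_mem_rdesSet_insertMax {i : ℕ} (h : p ≤ i) :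
    i + 1 ∈ rdesSet r (insertMax τ p) ↔ i ∈ rdesSet r τ := by
  rw [mem_rdesSet, mem_rdesSet, pval_insertMax_succ_of_le τ p h,
    pval_insertMax_succ_of_le τ p (by omega)]
  omega

lemma erase_rdesSet_insertMax :
    (rdesSet r (insertMax τ p)).erase p =
      {i ∈ rdesSet r τ | i + 1 ≠ (p : ℕ)}.image fun i => if i < (p : ℕ) then i else i + 1 := by
  ext i
  simp only [mem_erase, mem_image, mem_filter]
  constructor
  · rintro ⟨hip, hi⟩
    rcases lt_or_gt_of_ne hip with hlt | hgt
    · have hsucc : i + 1 ≠ p := fun h => notMem_rdesSet_insertMax_of_succ_eq τ p h hi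
      refine ⟨i, ⟨(mem_rdesSet_insertMax_of_succ_lt τ p (by omega)).mp hi, hsucc⟩, if_pos hlt⟩
    · obtain ⟨j, rfl⟩ : ∃ j, i = j + 1 := ⟨i - 1, by omega⟩
      refine ⟨j, ⟨(succ_mem_rdesSet_insertMax τ p (by omega)).mp hi, by omega⟩, if_neg (by omega)⟩
  · rintro ⟨j, ⟨hj, hjp⟩, rfl⟩
    split_ifs with hlt
    · exact ⟨by omega, (mem_rdesSet_insertMax_of_succ_lt τ p (by omega)).mpr hj⟩
    · exact ⟨by omega, (succ_mem_rdesSet_insertMax τ p (by omega)).mpr hj⟩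

lemma rdes_insertMax :
    rdes r (insertMax τ p) =
      rdes r τ + if ↑p ∈ rdesCreatingSlots r τ \ rdesBreakingSlots r τ then 1 else 0 := by
  have hshift : StrictMono fun i : ℕ => if i < (p : ℕ) then i else i + 1 := by
    intro a b hab
    dsimp only
    split_ifs <;> omega
  have hnew : rdes r (insertMax τ p) =
      #{i ∈ rdesSet r τ | i + 1 ≠ (p : ℕ)} + if ↑p ∈ rdesCreatingSlots r τ then 1 else 0 := by
    rw [← card_image_of_injective _ hshift.injective, ← erase_rdesSet_insertMax, rdes]
    by_cases hC : ↑p ∈ rdesCreatingSlots r τ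
    · rw [if_pos hC, card_erase_add_one ((mem_rdesSet_insertMax_self τ p).mpr hC)]
    · rw [if_neg hC, erase_eq_of_notMem (mt (mem_rdesSet_insertMax_self τ p).mp hC), add_zero]
  have hold : rdes r τ =
      #{i ∈ rdesSet r τ | i + 1 ≠ (p : ℕ)} + if ↑p ∈ rdesBreakingSlots r τ then 1 else 0 := by
    rw [rdesBreakingSlots, ← card_filter_succ_eq, rdes, ← card_filter_add_card_filter_not
      (s := rdesSet r τ) (fun i => i + 1 ≠ (p : ℕ))]
    simp only [ne_eq, not_not]
  have hsub := rdesBreakingSlots_subset_rdesCreatingSlots (r := r) τ (x := p)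
  rw [hnew, hold]
  simp only [mem_sdiff]
  split_ifs <;> simp_all

end rdes

lemma card_filter_val_mem {N : ℕ} {S : Finset ℕ} (hS : S ⊆ range N) :
    #{p : Fin N | ↑p ∈ S} = #S := by
  have h := filter_map (f := Fin.valEmbedding) (s := (univ : Finset (Fin N))) (p := (· ∈ S))
  rw [Fin.map_valEmbedding_univ, Nat.Iio_eq_range, filter_mem_eq_inter, inter_eq_right.mpr hS] at h
  conv_rhs => rw [h, card_map]
  rfl

section count

variable {r : ℕ}

lemma card_rdesBreakingSlots {m : ℕ} (τ : Equiv.Perm (Fin m)) :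
    #(rdesBreakingSlots r τ) = rdes r τ :=
  card_map _

lemma card_rdesCreatingSlots (hr : 1 ≤ r) {n : ℕ} (τ : Equiv.Perm (Fin (n + r))) :
    #(rdesCreatingSlots r τ) = n + 1 := by
  rw [rdesCreatingSlots, card_filter_pval τ (fun v => v + r ≤ n + r), ← card_range (n + 1)]
  congr 1
  ext v
  simp only [mem_filter, mem_range]
  omega

lemma sum_ite_rdes_eq {m : ℕ} (k c : ℕ) :
    ∑ τ : Equiv.Perm (Fin m), (if rdes r τ = k then c else 0) = c * rEulerian m k r := by
  rw [← sum_filter, sum_const, smul_eq_mul, mul_comm, rEulerian]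

end count

lemma rEulerian_succ_eq_sum (m k r : ℕ) :
    rEulerian (m + 1) k r = ∑ τ : Equiv.Perm (Fin m), #{p | rdes r (insertMax τ p) = k} := by
  rw [rEulerian, card_filter, ← (Equiv.ofBijective _ insertMax_bijective).sum_comp,
    Fintype.sum_prod_type]
  simp only [Equiv.ofBijective_apply, card_filter]

section recursion

variable {r n : ℕ}

lemma card_filter_rdes_insertMax_eq (hr : 1 ≤ r) (τ : Equiv.Perm (Fin (n + r))) (k : ℕ) :
    #{p | rdes r (insertMax τ p) = k} =
      (if rdes r τ = k then k + r else 0) + if rdes r τ + 1 = k then n + 2 - k else 0 := by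
  set R := rdesCreatingSlots r τ \ rdesBreakingSlots r τ
  have hsub := rdesBreakingSlots_subset_rdesCreatingSlots (r := r) τ
  have hR : #R + rdes r τ = n + 1 := by
    have := card_le_card hsub
    rw [card_sdiff_of_subset hsub]
    rw [card_rdesBreakingSlots, card_rdesCreatingSlots hr] at *
    omega
  have hin : #{p : Fin (n + r + 1) | ↑p ∈ R} = #R := by
    refine card_filter_val_mem fun i hi => ?_
    have := mem_range.mp (mem_filter.mp (mem_sdiff.mp hi).1).1
    exact mem_range.mpr (by omega)
  have hsplit := card_filter_add_card_filter_not (s := (univ : Finset (Fin (n + r + 1))))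
    (fun p => ↑p ∈ R)
  rw [card_univ, Fintype.card_fin] at hsplit
  have key (p : Fin (n + r + 1)) : rdes r (insertMax τ p) = rdes r τ + if ↑p ∈ R then 1 else 0 :=
    rdes_insertMax τ p
  simp only [key]
  obtain hk | hk | ⟨hk, hk'⟩ :
      rdes r τ = k ∨ rdes r τ + 1 = k ∨ rdes r τ ≠ k ∧ rdes r τ + 1 ≠ k := by omega
  · rw [if_pos hk, if_neg (by omega), add_zero]
    trans #{p : Fin (n + r + 1) | ↑p ∉ R}
    · refine congrArg card (filter_congr fun p _ => ?_)
      by_cases h : ↑p ∈ R <;> simp [h] <;> omega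
    · omega
  · rw [if_neg (by omega), if_pos hk, zero_add]
    trans #{p : Fin (n + r + 1) | ↑p ∈ R}
    · refine congrArg card (filter_congr fun p _ => ?_)
      by_cases h : ↑p ∈ R <;> simp [h] <;> omega
    · omega
  · rw [if_neg hk, if_neg hk', add_zero, card_eq_zero, filter_eq_empty_iff]
    intro p _
    split_ifs <;> omega

lemma rEulerian_succ_zero (hr : 1 ≤ r) :
    rEulerian (n + r + 1) 0 r = r * rEulerian (n + r) 0 r := by
  simp only [rEulerian_succ_eq_sum, card_filter_rdes_insertMax_eq hr, add_eq_zero, one_ne_zero,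
    and_false, if_false, add_zero, zero_add, sum_ite_rdes_eq]

lemma rEulerian_succ_succ (hr : 1 ≤ r) (k : ℕ) :
    rEulerian (n + r + 1) (k + 1) r =
      (k + 1 + r) * rEulerian (n + r) (k + 1) r + (n + 1 - k) * rEulerian (n + r) k r := by
  simp only [rEulerian_succ_eq_sum, card_filter_rdes_insertMax_eq hr, sum_add_distrib,
    add_left_inj, sum_ite_rdes_eq]
  congr 2
  omega

end recursion

lemma stE_eq_zero_of_lt {s t n k : ℕ} (h : n < k) : stE s t n k = 0 := by
  induction n generalizing k with
  | zero => simp [stE, Nat.pos_iff_ne_zero.mp h]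
  | succ n ih =>
    obtain ⟨k, rfl⟩ : ∃ j, k = j + 1 := ⟨k - 1, by omega⟩
    rw [stE, ih (by omega), ih (by omega), mul_zero, mul_zero, add_zero]

lemma rEulerian_self (k r : ℕ) : rEulerian r k r = if k = 0 then r.factorial else 0 := by
  have hrdes (σ : Equiv.Perm (Fin r)) : rdes r σ = 0 := by
    rw [rdes, card_eq_zero, rdesSet, filter_eq_empty_iff]
    intro i hi
    have := pval_lt σ (i := i) (by simp at hi; omega)
    omega
  simp only [rEulerian, hrdes]
  split_ifs with hk
  · simp [hk, Fintype.card_perm]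
  · simp [Ne.symm hk]

theorem stE_r_one_eq_rEulerian_general (r n k : ℕ) (hr : 1 ≤ r) :
    Nat.factorial r * stE r 1 n k = rEulerian (n + r) k r := by
  induction n generalizing k with
  | zero => cases k <;> simp [stE, rEulerian_self]
  | succ n ih =>
    rw [show n + 1 + r = n + r + 1 by omega]
    cases k with
    | zero => rw [stE, rEulerian_succ_zero hr, ← ih]; ring
    | succ k =>
      rw [stE, rEulerian_succ_succ hr, ← ih, ← ih]
      rcases le_or_gt k n with hk | hk
      · rw [show n + 1 - k = n - k + 1 by omega]; ring
      · rw [stE_eq_zero_of_lt hk]; ring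

theorem stE_r_one_eq_rEulerian (r n k : ℕ) (hr : 1 ≤ r) (hk : k ≤ n) :
    Nat.factorial r * stE r 1 n k = rEulerian (n + r) k r :=
  stE_r_one_eq_rEulerian_general r n k hr
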